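/- For nonzero matrices X (N × P), Y (N × Q), define MMD²(X,Y) = ((1/N²)Σ_{i,j}⟨xᵢ,xⱼ⟩ − (1/N²)Σ_{i,j}⟨yᵢ,yⱼ⟩)² with xᵢ, yᵢ the rows of the Gram-normalized matrices X/√‖XXᵀ‖_F and Y/√‖YYᵀ‖_F. Then S(X,Y) ≤ 2 − N²·MMD²(X,Y), where S(X,Y) = ‖YᵀX‖_F²/(‖XᵀX‖_F‖YᵀY‖_F). Consequently MMD²(X,Y) ≤ (2 − S(X,Y))/N². -/

import Mathlib

open Matrix BigOperators

noncomputable def frob {m n : ℕ} (A : Matrix (Fin m) (Fin n) ℝ) : ℝ :=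
  Real.sqrt (∑ i, ∑ j, (A i j) ^ 2)

noncomputable def S {N P Q : ℕ} (X : Matrix (Fin N) (Fin P) ℝ)
    (Y : Matrix (Fin N) (Fin Q) ℝ) : ℝ :=
  (frob (Yᵀ * X)) ^ 2 / (frob (Xᵀ * X) * frob (Yᵀ * Y))

/-!
Write `A = XXᵀ / ‖XXᵀ‖_F` and `B = YYᵀ / ‖YYᵀ‖_F` for the normalized Gram matrices; the Gram
matrix of the rows `xᵢ` is `A`, so `N² · MMD² = (Σᵢⱼ (A - B)ᵢⱼ)² / N²`. Since
`⟨XXᵀ, YYᵀ⟩_F = ‖YᵀX‖_F²` and `‖XᵀX‖_F = ‖XXᵀ‖_F`, the Frobenius inner product `⟨A, B⟩_F` is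
exactly `S(X, Y)`, hence `‖A - B‖_F² ≤ 2 - 2 S(X, Y)`. Cauchy–Schwarz over the `N²` entries bounds
`(Σᵢⱼ (A - B)ᵢⱼ)²` by `N² ‖A - B‖_F²`, and `S ≥ 0` gives the claim.
-/

theorem Matrix.sum_sum_gram_mul_gram {ι κ μ : Type*} [Fintype ι] [Fintype κ] [Fintype μ]
    (A : Matrix ι κ ℝ) (B : Matrix ι μ ℝ) :
    ∑ i, ∑ j, (A * Aᵀ) i j * (B * Bᵀ) i j = ∑ q, ∑ p, (Bᵀ * A) q p ^ 2 := by
  simp only [sq, ← hadamard_apply, sum_hadamard_eq, transpose_mul, transpose_transpose]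
  rw [← Matrix.mul_assoc, trace_mul_cycle]
  simp only [Matrix.mul_assoc]

theorem sq_sum_sum_le_card_mul_sum_sum_sq {ι κ : Type*} [Fintype ι] [Fintype κ]
    (d : ι → κ → ℝ) :
    (∑ i, ∑ j, d i j) ^ 2 ≤ (Fintype.card ι * Fintype.card κ) * ∑ i, ∑ j, d i j ^ 2 := by
  simpa [← Fintype.sum_prod_type'] using
    sq_sum_le_card_mul_sum_sq (s := Finset.univ) (f := fun x : ι × κ => d x.1 x.2)

section Frobenius

variable {N P Q : ℕ}

lemma frob_nonneg {m n : ℕ} (A : Matrix (Fin m) (Fin n) ℝ) : 0 ≤ frob A :=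
  Real.sqrt_nonneg _

lemma frob_sq {m n : ℕ} (A : Matrix (Fin m) (Fin n) ℝ) :
    frob A ^ 2 = ∑ i, ∑ j, A i j ^ 2 :=
  Real.sq_sqrt (by positivity)

lemma frob_transpose_mul_self (X : Matrix (Fin N) (Fin P) ℝ) :
    frob (Xᵀ * X) = frob (X * Xᵀ) := by
  rw [frob, frob, ← Matrix.sum_sum_gram_mul_gram X X]
  simp only [sq]

lemma S_nonneg (X : Matrix (Fin N) (Fin P) ℝ) (Y : Matrix (Fin N) (Fin Q) ℝ) : 0 ≤ S X Y :=
  div_nonneg (sq_nonneg _) (mul_nonneg (frob_nonneg _) (frob_nonneg _))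

noncomputable def normalizedGram (X : Matrix (Fin N) (Fin P) ℝ) : Matrix (Fin N) (Fin N) ℝ :=
  (frob (X * Xᵀ))⁻¹ • (X * Xᵀ)

/-- The sum is `1` unless `X = 0`, where `0⁻¹ = 0` makes it `0`. -/
lemma sum_sq_normalizedGram_le_one (X : Matrix (Fin N) (Fin P) ℝ) :
    ∑ i, ∑ j, normalizedGram X i j ^ 2 ≤ 1 := by
  have h : ∑ i, ∑ j, normalizedGram X i j ^ 2 = (frob (X * Xᵀ))⁻¹ ^ 2 * frob (X * Xᵀ) ^ 2 := by
    simp only [normalizedGram, Matrix.smul_apply, smul_eq_mul, mul_pow, ← Finset.mul_sum, frob_sq]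
  rw [h, ← mul_pow]
  exact pow_le_one₀ (mul_nonneg (inv_nonneg.2 (frob_nonneg _)) (frob_nonneg _))
    (inv_mul_le_one_of_le₀ le_rfl (frob_nonneg _))

lemma sum_normalizedGram_mul_normalizedGram (X : Matrix (Fin N) (Fin P) ℝ)
    (Y : Matrix (Fin N) (Fin Q) ℝ) :
    ∑ i, ∑ j, normalizedGram X i j * normalizedGram Y i j = S X Y := by
  have hentry : ∀ i j, normalizedGram X i j * normalizedGram Y i j =
      (frob (X * Xᵀ) * frob (Y * Yᵀ))⁻¹ * ((X * Xᵀ) i j * (Y * Yᵀ) i j) := by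
    intro i j
    simp only [normalizedGram, Matrix.smul_apply, smul_eq_mul, mul_inv]
    ring
  rw [S, frob_transpose_mul_self, frob_transpose_mul_self, frob_sq,
    ← Matrix.sum_sum_gram_mul_gram, div_eq_inv_mul, Finset.mul_sum]
  simp_rw [Finset.mul_sum, hentry]

lemma sum_sq_normalizedGram_sub_le (X : Matrix (Fin N) (Fin P) ℝ)
    (Y : Matrix (Fin N) (Fin Q) ℝ) :
    ∑ i, ∑ j, (normalizedGram X - normalizedGram Y) i j ^ 2 ≤ 2 - 2 * S X Y := by
  have hexpand : ∀ i j, (normalizedGram X - normalizedGram Y) i j ^ 2 =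
      normalizedGram X i j ^ 2 + normalizedGram Y i j ^ 2 -
        2 * (normalizedGram X i j * normalizedGram Y i j) := by
    intro i j
    rw [Matrix.sub_apply]
    ring
  simp only [hexpand, Finset.sum_add_distrib, Finset.sum_sub_distrib, ← Finset.mul_sum,
    sum_normalizedGram_mul_normalizedGram]
  linarith [sum_sq_normalizedGram_le_one X, sum_sq_normalizedGram_le_one Y]

lemma sum_mul_eq_normalizedGram {X : Matrix (Fin N) (Fin P) ℝ} {x : Fin N → Fin P → ℝ}
    (hx : ∀ i p, x i p = X i p / Real.sqrt (frob (X * Xᵀ))) (i j : Fin N) :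
    ∑ p, x i p * x j p = normalizedGram X i j := by
  rw [normalizedGram, Matrix.smul_apply, smul_eq_mul, mul_apply, Finset.mul_sum,
    ← Real.mul_self_sqrt (frob_nonneg (X * Xᵀ))]
  refine Finset.sum_congr rfl fun p _ => ?_
  rw [hx, hx, transpose_apply, div_mul_div_comm, div_eq_inv_mul]

end Frobenius

theorem cka_bounds_mmd_general {N P Q : ℕ}
    (X : Matrix (Fin N) (Fin P) ℝ) (Y : Matrix (Fin N) (Fin Q) ℝ)
    (x : Fin N → Fin P → ℝ) (y : Fin N → Fin Q → ℝ)
    (hx : ∀ i p, x i p = X i p / Real.sqrt (frob (X * Xᵀ)))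
    (hy : ∀ i q, y i q = Y i q / Real.sqrt (frob (Y * Yᵀ)))
    (MMD2 : ℝ)
    (hMMD : MMD2 =
      ((1 / (N : ℝ) ^ 2) * (∑ i, ∑ j, ∑ p, x i p * x j p) -
        (1 / (N : ℝ) ^ 2) * (∑ i, ∑ j, ∑ q, y i q * y j q)) ^ 2) :
    S X Y ≤ 2 - (N : ℝ) ^ 2 * MMD2 ∧
      MMD2 ≤ (2 - S X Y) / (N : ℝ) ^ 2 := by
  rcases N.eq_zero_or_pos with rfl | hN
  · simp [hMMD, S, frob]
  set d := normalizedGram X - normalizedGram Y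
  have hMMD' : (N : ℝ) ^ 2 * MMD2 = (∑ i, ∑ j, d i j) ^ 2 / (N : ℝ) ^ 2 := by
    simp only [hMMD, sum_mul_eq_normalizedGram hx, sum_mul_eq_normalizedGram hy, d,
      Matrix.sub_apply, Finset.sum_sub_distrib]
    field_simp
  have hCauchySchwarz : (∑ i, ∑ j, d i j) ^ 2 / (N : ℝ) ^ 2 ≤ ∑ i, ∑ j, d i j ^ 2 := by
    rw [div_le_iff₀ (by positivity)]
    simpa [sq, mul_comm] using sq_sum_sum_le_card_mul_sum_sum_sq d
  have key : (N : ℝ) ^ 2 * MMD2 ≤ 2 - S X Y := by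
    linarith [sum_sq_normalizedGram_sub_le X Y, S_nonneg X Y]
  exact ⟨by linarith, by rw [le_div_iff₀ (by positivity)]; linarith⟩

theorem cka_bounds_mmd {N P Q : ℕ}
    (X : Matrix (Fin N) (Fin P) ℝ) (Y : Matrix (Fin N) (Fin Q) ℝ)
    (hX : X ≠ 0) (hY : Y ≠ 0)
    (x : Fin N → Fin P → ℝ) (y : Fin N → Fin Q → ℝ)
    (hx : ∀ i p, x i p = X i p / Real.sqrt (frob (X * Xᵀ)))
    (hy : ∀ i q, y i q = Y i q / Real.sqrt (frob (Y * Yᵀ)))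
    (MMD2 : ℝ)
    (hMMD : MMD2 =
      ((1 / (N : ℝ) ^ 2) * (∑ i, ∑ j, ∑ p, x i p * x j p) -
        (1 / (N : ℝ) ^ 2) * (∑ i, ∑ j, ∑ q, y i q * y j q)) ^ 2) :
    S X Y ≤ 2 - (N : ℝ) ^ 2 * MMD2 ∧
      MMD2 ≤ (2 - S X Y) / (N : ℝ) ^ 2 :=
  cka_bounds_mmd_general X Y x y hx hy MMD2 hMMD
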